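/- arXiv:1506.06173 — 2 statements merged into one kernel-verified Lean document; each statement's English description precedes it below -/
import Mathlib

section
/- Let σ > 0 and L > 0. Define h(x) = (2πσ²)^{-1/2} exp(-x²/(2σ²)) and the wrapped density (Qh)(x) = Σ_{n∈ℤ} h(x + 2πLn). Then for every x ∈ ℝ, (Qh)(x) ≥ β/(2πL), where β = 1 - 2e^{-σ²/(2L²)}/(1 - e^{-σ²/(2L²)}). -/
/-!
Writing the wrapped Gaussian as Mathlib's even Hurwitz kernel, Poisson summation
(`HurwitzZeta.evenKernel_functional_equation`) turns it into `1/(2πL)` times the Fourier series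
`1 + 2 ∑_{k ≥ 1} cos(k x / L) e^{-k² σ²/(2L²)}`. Bounding each cosine below by `-1` and
`e^{-k² s}` above by `e^{-k s}` leaves a geometric series, whose sum is `(1 - β)/2`.
-/

open Real

section

open HurwitzZeta

theorem one_sub_two_mul_div_le_cosKernel (a : ℝ) {t : ℝ} (ht : 0 < t) :
    1 - 2 * exp (-(π * t)) / (1 - exp (-(π * t))) ≤ cosKernel a t := by
  set q := exp (-(π * t))
  have hq0 : 0 ≤ q := (exp_pos _).le
  have hq1 : q < 1 := exp_lt_one_iff.mpr (by linarith [mul_pos pi_pos ht])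
  have hgeom := (hasSum_geometric_of_lt_one hq0 hq1).mul_left (-2 * q)
  have hterm (n : ℕ) :
      -2 * q * q ^ n ≤ 2 * Real.cos (2 * π * a * (n + 1)) * exp (-π * (n + 1) ^ 2 * t) := by
    have hdecay : exp (-π * (n + 1) ^ 2 * t) ≤ q * q ^ n := by
      rw [← pow_succ', ← exp_nat_mul, exp_le_exp]
      have : (n + 1 : ℝ) ≤ (n + 1) ^ 2 := by nlinarith
      push_cast
      nlinarith [mul_le_mul_of_nonneg_left this (mul_pos pi_pos ht).le]
    nlinarith [neg_one_le_cos (2 * π * a * (n + 1)), exp_pos (-π * (n + 1) ^ 2 * t)]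
  have := hasSum_le hterm hgeom (hasSum_nat_cosKernel₀ a ht)
  rw [div_eq_mul_inv]
  linarith

theorem tsum_exp_neg_add_mul_int_sq_eq_evenKernel {σ P : ℝ} (hσ : σ ≠ 0) (hP : P ≠ 0) (x : ℝ) :
    ∑' n : ℤ, exp (-(x + P * n) ^ 2 / (2 * σ ^ 2)) =
      evenKernel (x / P) (P ^ 2 / (2 * π * σ ^ 2)) := by
  refine ((hasSum_int_evenKernel (x / P) (by positivity)).congr_fun fun n ↦ ?_).tsum_eq
  congr 1
  field_simp
  ring

theorem tsum_gaussian_add_mul_int_eq_cosKernel {σ P : ℝ} (hσ : 0 < σ) (hP : 0 < P) (x : ℝ) :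
    ∑' n : ℤ, (2 * π * σ ^ 2) ^ (-(1 : ℝ) / 2) * exp (-(x + P * n) ^ 2 / (2 * σ ^ 2)) =
      cosKernel (x / P) (2 * π * σ ^ 2 / P ^ 2) / P := by
  have hc : 0 < 2 * π * σ ^ 2 := by positivity
  rw [tsum_mul_left, tsum_exp_neg_add_mul_int_sq_eq_evenKernel hσ.ne' hP.ne',
    evenKernel_functional_equation, one_div_div, div_rpow (sq_nonneg P) hc.le, ← sqrt_eq_rpow,
    sqrt_sq hP.le, neg_div, rpow_neg hc.le]
  field_simp

end

/-- **Spreading of a wrapped Gaussian.** For `σ, L > 0`, the Gaussian density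
`h(x) = (2πσ²)^{-1/2} exp(-x²/(2σ²))` wrapped onto the torus of length `2πL`,
`(Qh)(x) = ∑_{n ∈ ℤ} h(x + 2πLn)`, satisfies `(Qh)(x) ≥ β/(2πL)` for every `x`,
where `1 - β = 2 e^{-σ²/(2L²)} / (1 - e^{-σ²/(2L²)})`. -/
theorem wrapped_gaussian_lower_bound (σ L : ℝ) (hσ : 0 < σ) (hL : 0 < L)
    (h : ℝ → ℝ) (hdef : ∀ x, h x = (2 * π * σ ^ 2) ^ (-(1:ℝ)/2) * exp (-x ^ 2 / (2 * σ ^ 2)))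
    (β : ℝ)
    (hβ : β = 1 - 2 * exp (-σ ^ 2 / (2 * L ^ 2)) / (1 - exp (-σ ^ 2 / (2 * L ^ 2)))) :
    ∀ x : ℝ, (∑' n : ℤ, h (x + 2 * π * L * n)) ≥ β / (2 * π * L) := by
  intro x
  have hP : 0 < 2 * π * L := by positivity
  simp only [hdef]
  rw [tsum_gaussian_add_mul_int_eq_cosKernel hσ hP, ge_iff_le, hβ]
  have ht : -σ ^ 2 / (2 * L ^ 2) = -(π * (2 * π * σ ^ 2 / (2 * π * L) ^ 2)) := by
    field_simp
  gcongr
  rw [ht]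
  exact one_sub_two_mul_div_le_cosKernel _ (by positivity)
end

section
/- Suppose there exist functions α : (0, πL] → ℝ⁺ and β ∈ L¹([0,∞); ℝ⁺) such that for every z ∈ (0, πL] there are two standard Brownian motions W¹, W² on the torus 𝕋 = ℝ/(2πLℤ) with a common filtration, |W¹_0 - W²_0|_𝕋 = z, and E[|W¹_t - W²_t|²_𝕋] ≤ α(z)² β(t) for all t ≥ 0. Then there is a constant c > 0 depending only on L such that α(z) ≥ c ‖β‖_{L¹}^{-1/2} √z for all z ∈ (0, πL]. -/
open Real MeasureTheory ProbabilityTheory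

/-- `W` is a standard one-dimensional Brownian motion with respect to the filtration `𝒢`:
it is adapted with a.s. continuous paths, its increments `W_t - W_s` (for `0 ≤ s ≤ t`)
are centered Gaussians of variance `t - s`, and each increment is independent of `𝒢_s`.
(A Brownian motion on the torus `ℝ/(2πLℤ)` is represented by its real-valued lift.) -/
def IsBrownianMotion {Ω : Type} [m : MeasurableSpace Ω] (P : Measure Ω)
    (𝒢 : Filtration ℝ m) (W : ℝ → Ω → ℝ) : Prop :=
  (∀ t, Measurable (W t)) ∧
  (∀ᵐ ω ∂P, Continuous fun t => W t ω) ∧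
  Adapted 𝒢 W ∧
  (∀ s t : ℝ, 0 ≤ s → s ≤ t →
    Measure.map (fun ω => W t ω - W s ω) P = gaussianReal 0 (Real.toNNReal (t - s)) ∧
    Indep (MeasurableSpace.comap (fun ω => W t ω - W s ω) inferInstance) (𝒢 s) P)

/-!
Let `R_t = ‖W¹_t - W²_t‖` be the distance on the circle of period `p = 2πL` and `a = p / 2`.
The Lyapunov function `testFn p r = a³ r / 6 - r⁴ / 24` is comparable to `r` on `[0, a]`, its
derivative vanishes at `a`, so that `x ↦ testFn p ‖x‖` is differentiable on the circle away from
`0`, and its second derivative is `-r² / 2`. Whatever the coupling, an increment of `W¹ - W²` has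
second moment at most `4 dt`, so by Itô's formula `E testFn p (R_t)` decreases at rate at most
`E R_t²`. To avoid stochastic calculus, a second-order Taylor bound on the circle and the
independence of the Gaussian increments from the past give
`E testFn p (R_s) - E testFn p (R_t) ≤ (t - s) E R_s² + O((t - s)^{3/2})`, and a Dini-derivative
comparison integrates this. As `E R_T²` is small for some large `T`, so is `E testFn p (R_T)`,
hence `a³ z / 8 ≤ testFn p z ≤ ∫₀^∞ E R_t² dt ≤ α(z)² ‖β‖_{L¹}`.
-/

open Set Filter Topology
open scoped NNReal

namespace AddCircle

variable {p : ℝ}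

noncomputable def centeredRep (p x : ℝ) : ℝ := x - round (p⁻¹ * x) * p

lemma norm_coe_eq_abs_centeredRep (x : ℝ) : ‖(x : AddCircle p)‖ = |centeredRep p x| :=
  AddCircle.norm_eq p

lemma abs_centeredRep_le (hp : 0 < p) (x : ℝ) : |centeredRep p x| ≤ p / 2 := by
  simpa [← norm_coe_eq_abs_centeredRep, abs_of_pos hp] using
    AddCircle.norm_le_half_period p (x := (x : AddCircle p)) hp.ne'

lemma coe_centeredRep (x : ℝ) : ((centeredRep p x : ℝ) : AddCircle p) = x := by
  rw [centeredRep, AddCircle.coe_sub, ← zsmul_eq_mul, AddCircle.coe_zsmul, AddCircle.coe_period,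
    smul_zero, sub_zero]

@[fun_prop]
lemma measurable_centeredRep : Measurable (centeredRep p) := by
  unfold centeredRep
  simp_rw [round_eq]
  fun_prop

lemma norm_coe_le_half_period (hp : 0 < p) (x : ℝ) : ‖(x : AddCircle p)‖ ≤ p / 2 := by
  rw [norm_coe_eq_abs_centeredRep]; exact abs_centeredRep_le hp x

lemma norm_coe_sub_period (x : ℝ) : ‖((x - p : ℝ) : AddCircle p)‖ = ‖(x : AddCircle p)‖ := by
  rw [AddCircle.coe_sub, AddCircle.coe_period, sub_zero]

lemma norm_coe_centeredRep_add (x h : ℝ) :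
    ‖((centeredRep p x + h : ℝ) : AddCircle p)‖ = ‖((x + h : ℝ) : AddCircle p)‖ := by
  rw [coe_add, coe_add, coe_centeredRep]

end AddCircle

namespace ProbabilityTheory

noncomputable def gaussianAbsThirdMoment : ℝ := ∫ x, |x| ^ 3 ∂gaussianReal 0 1

lemma integral_sq_gaussianReal (v : ℝ≥0) : ∫ x, x ^ 2 ∂gaussianReal 0 v = v := by
  rw [← variance_of_integral_eq_zero aemeasurable_id' integral_id_gaussianReal,
    variance_fun_id_gaussianReal]

lemma integral_abs_pow_three_gaussianReal (v : ℝ≥0) :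
    ∫ x, |x| ^ 3 ∂gaussianReal 0 v = √v ^ 3 * gaussianAbsThirdMoment := by
  have hscale : (gaussianReal 0 1).map (fun x => √v * x) = gaussianReal 0 v := by
    rw [gaussianReal_map_const_mul, mul_zero, mul_one]
    congr 1
    apply NNReal.eq
    simp
  rw [← hscale, integral_map (by fun_prop) (by fun_prop)]
  simp_rw [abs_mul, mul_pow, abs_of_nonneg (sqrt_nonneg _)]
  exact integral_const_mul _ _

variable {Ω : Type*} {mΩ : MeasurableSpace Ω} {P : Measure Ω} {X Y Z : Ω → ℝ}

lemma HasLaw.memLp_gaussianReal {μ : ℝ} {v : ℝ≥0} (hX : HasLaw X (gaussianReal μ v) P)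
    (q : ℝ≥0) : MemLp X q P := by
  have := memLp_id_gaussianReal (μ := μ) (v := v) q
  rw [← hX.map_eq] at this
  exact this.comp_of_map hX.aemeasurable

variable {m : MeasurableSpace Ω}

lemma integral_mul_comp_of_indep (hm : m ≤ mΩ)
    (hind : Indep (MeasurableSpace.comap X inferInstance) m P) (hX : AEMeasurable X P)
    (hY : Measurable[m] Y) {f : ℝ → ℝ} (hf : Measurable f) :
    ∫ ω, Y ω * f (X ω) ∂P = (∫ ω, Y ω ∂P) * ∫ ω, f (X ω) ∂P := by
  have hXY : IndepFun X Y P := indep_of_indep_of_le_right hind hY.comap_le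
  exact (hXY.comp hf measurable_id).symm.integral_mul_eq_mul_integral
    (hY.mono hm le_rfl).aestronglyMeasurable (hf.comp_aemeasurable hX).aestronglyMeasurable

lemma integral_gaussian_increment_term {δ : ℝ≥0} (hm : m ≤ mΩ)
    (hX : HasLaw X (gaussianReal 0 δ) P) (hind : Indep (MeasurableSpace.comap X inferInstance) m P)
    (hY : Measurable[m] Y) (hZ : Measurable[m] Z) {B C : ℝ} (hYB : ∀ ω, |Y ω| ≤ B)
    (hZC : ∀ ω, |Z ω| ≤ C) (K : ℝ) :
    Integrable (fun ω => Y ω * X ω - Z ω * X ω ^ 2 - K * |X ω| ^ 3) P ∧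
      ∫ ω, (Y ω * X ω - Z ω * X ω ^ 2 - K * |X ω| ^ 3) ∂P
        = -(δ * ∫ ω, Z ω ∂P) - K * (√δ ^ 3 * gaussianAbsThirdMoment) := by
  have hint₁ : Integrable X P := memLp_one_iff_integrable.mp (hX.memLp_gaussianReal 1)
  have hint₂ : Integrable (fun ω => X ω ^ 2) P := (hX.memLp_gaussianReal 2).integrable_sq
  have hint₃ : Integrable (fun ω => |X ω| ^ 3) P :=
    (hX.memLp_gaussianReal 3).integrable_norm_pow (by norm_num)
  have hYX := hint₁.bdd_mul (hY.mono hm le_rfl).aestronglyMeasurable (ae_of_all _ hYB)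
  have hZX := hint₂.bdd_mul (hZ.mono hm le_rfl).aestronglyMeasurable (ae_of_all _ hZC)
  have hYXZX : Integrable (fun ω => Y ω * X ω - Z ω * X ω ^ 2) P := hYX.sub hZX
  refine ⟨hYXZX.sub (hint₃.const_mul K), ?_⟩
  rw [integral_sub hYXZX (hint₃.const_mul K), integral_sub hYX hZX, integral_const_mul,
    integral_mul_comp_of_indep hm hind hX.aemeasurable hY (f := fun x => x) measurable_id,
    integral_mul_comp_of_indep hm hind hX.aemeasurable hZ (f := fun x => x ^ 2) (by fun_prop)]
  have hmean : ∫ ω, X ω ∂P = 0 := by rw [hX.integral_eq, integral_id_gaussianReal]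
  have hvar : ∫ ω, X ω ^ 2 ∂P = δ := by
    rw [← integral_sq_gaussianReal]; exact hX.integral_comp (f := fun x => x ^ 2) (by fun_prop)
  have hcube : ∫ ω, |X ω| ^ 3 ∂P = √δ ^ 3 * gaussianAbsThirdMoment := by
    rw [← integral_abs_pow_three_gaussianReal]
    exact hX.integral_comp (f := fun x => |x| ^ 3) (by fun_prop)
  rw [hmean, hvar, hcube]
  ring

end ProbabilityTheory

namespace CoadaptedCoupling

open AddCircle

variable {p : ℝ}

section TestFunction

noncomputable def testFn (p r : ℝ) : ℝ := (p / 2) ^ 3 / 6 * r - r ^ 4 / 24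

noncomputable def testDeriv (p r : ℝ) : ℝ := (p / 2) ^ 3 / 6 - r ^ 3 / 6

/-- The derivative of `x ↦ testFn p ‖(x : AddCircle p)‖`, taken from the right at `x ∈ pℤ`;
no choice is needed at the antipode, where `testDeriv p (p / 2) = 0`. -/
noncomputable def testSlope (p x : ℝ) : ℝ :=
  if 0 ≤ centeredRep p x then testDeriv p (centeredRep p x)
  else -testDeriv p (-centeredRep p x)

@[fun_prop]
lemma continuous_testFn : Continuous (testFn p) := by
  unfold testFn; fun_prop

lemma testFn_nonneg (hp : 0 < p) {r : ℝ} (hr₀ : 0 ≤ r) (hr : r ≤ p / 2) : 0 ≤ testFn p r := by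
  have : r ^ 4 ≤ r * (p / 2) ^ 3 := by rw [pow_succ']; gcongr
  have : 0 ≤ r * (p / 2) ^ 3 := by positivity
  unfold testFn
  linarith

lemma testFn_le (p : ℝ) {r : ℝ} (hr₀ : 0 ≤ r) : testFn p r ≤ (p / 2) ^ 3 / 6 * r := by
  unfold testFn
  nlinarith [pow_nonneg hr₀ 4]

lemma mul_le_testFn {r : ℝ} (hr₀ : 0 ≤ r) (hr : r ≤ p / 2) :
    (p / 2) ^ 3 / 8 * r ≤ testFn p r := by
  have : r ^ 4 ≤ r * (p / 2) ^ 3 := by rw [pow_succ']; gcongr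
  unfold testFn
  linarith

lemma testFn_le_testFn_norm_coe (hp : 0 < p) {y : ℝ} (hy₀ : -(p / 2) ≤ y) (hy : y ≤ p) :
    testFn p y ≤ testFn p ‖(y : AddCircle p)‖ := by
  rcases le_total y (p / 2) with hy' | hy'
  · have habs : |y| ≤ |p| / 2 := by rw [abs_of_pos hp]; exact abs_le.mpr ⟨hy₀, hy'⟩
    rw [(norm_coe_eq_abs_iff p hp.ne').mpr habs]
    have : |y| ^ 4 = y ^ 4 := by rw [← abs_pow, abs_of_nonneg (by positivity)]
    unfold testFn
    nlinarith [mul_le_mul_of_nonneg_left (le_abs_self y) (by positivity : 0 ≤ (p / 2) ^ 3 / 6)]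
  · -- past the antipode, `‖y‖ = p - y`
    have habs : |y - p| ≤ |p| / 2 := by
      rw [abs_of_pos hp]; exact abs_le.mpr ⟨by linarith, by linarith⟩
    rw [← norm_coe_sub_period, (norm_coe_eq_abs_iff p hp.ne').mpr habs,
      abs_of_nonpos (by linarith)]
    have : testFn p (-(y - p)) - testFn p y = p / 2 * (y - p / 2) ^ 3 / 3 := by
      unfold testFn; ring
    nlinarith [pow_nonneg (sub_nonneg.mpr hy') 3]

/-- For `|h| ≤ p / 2` this is Taylor's formula for the quartic `testFn p`; for larger `|h|` the
cubic term dominates everything else. -/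
lemma testFn_add_le (hp : 0 < p) {r : ℝ} (hr₀ : 0 ≤ r) (hr : r ≤ p / 2) (h : ℝ) :
    testFn p r + testDeriv p r * h - r ^ 2 / 4 * h ^ 2 - p / 2 * |h| ^ 3
      ≤ testFn p ‖((r + h : ℝ) : AddCircle p)‖ := by
  have hderiv₀ : 0 ≤ testDeriv p r := by
    have : r ^ 3 ≤ (p / 2) ^ 3 := by gcongr
    unfold testDeriv; linarith
  rcases le_or_gt |h| (p / 2) with hh | hh
  · obtain ⟨hh₀, hh₁⟩ := abs_le.mp hh
    have taylor : testFn p (r + h) = testFn p r + testDeriv p r * h - r ^ 2 / 4 * h ^ 2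
        - r / 6 * h ^ 3 - h ^ 4 / 24 := by
      unfold testFn testDeriv; ring
    have hcube : r * h ^ 3 ≤ p / 2 * |h| ^ 3 := by
      have : h ^ 3 ≤ |h| ^ 3 := by rw [← abs_pow]; exact le_abs_self _
      have : r * |h| ^ 3 ≤ p / 2 * |h| ^ 3 := by gcongr
      nlinarith [pow_nonneg (abs_nonneg h) 3]
    have hquart : h ^ 4 ≤ p / 2 * |h| ^ 3 := by
      rw [← Even.pow_abs (by decide) h, pow_succ]
      nlinarith [pow_nonneg (abs_nonneg h) 3]
    have := testFn_le_testFn_norm_coe hp (y := r + h) (by linarith) (by linarith)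
    nlinarith
  · have hfar : testFn p r + testDeriv p r * h ≤ p / 2 * |h| ^ 3 := by
      have h₁ : testFn p r ≤ (p / 2) ^ 3 / 6 * (p / 2) :=
        (testFn_le p hr₀).trans (by gcongr)
      have h₂ : testDeriv p r * h ≤ (p / 2) ^ 3 / 6 * |h| := by
        calc testDeriv p r * h ≤ testDeriv p r * |h| := by gcongr; exact le_abs_self h
          _ ≤ _ := by gcongr; unfold testDeriv; nlinarith [pow_nonneg hr₀ 3]
      have h₃ : (p / 2) ^ 2 * |h| ≤ |h| ^ 3 := by
        have : (p / 2) ^ 2 ≤ |h| ^ 2 := by gcongr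
        nlinarith [abs_nonneg h]
      nlinarith [mul_le_mul_of_nonneg_left h₃ (by positivity : 0 ≤ p / 2),
        mul_le_mul_of_nonneg_left hh.le (by positivity : 0 ≤ (p / 2) ^ 3)]
    have := testFn_nonneg hp (norm_nonneg _) (norm_coe_le_half_period hp (r + h))
    nlinarith [sq_nonneg r, sq_nonneg h]

lemma testFn_norm_coe_add_ge (hp : 0 < p) (x h : ℝ) :
    testFn p ‖(x : AddCircle p)‖ + testSlope p x * h - ‖(x : AddCircle p)‖ ^ 2 / 4 * h ^ 2
      - p / 2 * |h| ^ 3 ≤ testFn p ‖((x + h : ℝ) : AddCircle p)‖ := by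
  have hr := abs_le.mp (abs_centeredRep_le hp x)
  rw [← norm_coe_centeredRep_add, norm_coe_eq_abs_centeredRep, testSlope]
  split_ifs with h₀
  · rw [abs_of_nonneg h₀]
    exact testFn_add_le hp h₀ hr.2 h
  · have := testFn_add_le hp (r := -centeredRep p x) (by linarith) (by linarith) (-h)
    rw [← neg_add, coe_neg, norm_neg, abs_neg] at this
    rw [abs_of_neg (not_le.mp h₀)]
    linarith

lemma testFn_norm_coe_add_sub_ge (hp : 0 < p) (x a b : ℝ) :
    testFn p ‖(x : AddCircle p)‖
        + (testSlope p x * a - ‖(x : AddCircle p)‖ ^ 2 / 2 * a ^ 2 - 2 * p * |a| ^ 3)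
        + (-testSlope p x * b - ‖(x : AddCircle p)‖ ^ 2 / 2 * b ^ 2 - 2 * p * |b| ^ 3)
      ≤ testFn p ‖((x + a - b : ℝ) : AddCircle p)‖ := by
  have htaylor := testFn_norm_coe_add_ge hp x (a - b)
  rw [← add_sub_assoc] at htaylor
  have hsq : ‖(x : AddCircle p)‖ ^ 2 / 4 * (a - b) ^ 2
      ≤ ‖(x : AddCircle p)‖ ^ 2 / 2 * a ^ 2 + ‖(x : AddCircle p)‖ ^ 2 / 2 * b ^ 2 := by
    have : (a - b) ^ 2 ≤ 2 * a ^ 2 + 2 * b ^ 2 := by nlinarith [sq_nonneg (a + b)]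
    nlinarith [sq_nonneg ‖(x : AddCircle p)‖]
  have hcube : |a - b| ^ 3 ≤ 4 * (|a| ^ 3 + |b| ^ 3) :=
    calc |a - b| ^ 3 ≤ (|a| + |b|) ^ 3 := by gcongr; exact abs_sub _ _
      _ ≤ 2 ^ (3 - 1) * (|a| ^ 3 + |b| ^ 3) := add_pow_le (abs_nonneg a) (abs_nonneg b) 3
      _ = 4 * (|a| ^ 3 + |b| ^ 3) := by norm_num
  nlinarith

lemma abs_testSlope_le (hp : 0 < p) (x : ℝ) : |testSlope p x| ≤ (p / 2) ^ 3 / 6 := by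
  have hr := abs_le.mp (abs_centeredRep_le hp x)
  have key : ∀ r, 0 ≤ r → r ≤ p / 2 → |testDeriv p r| ≤ (p / 2) ^ 3 / 6 := fun r hr₀ hr₁ => by
    have : r ^ 3 ≤ (p / 2) ^ 3 := by gcongr
    rw [abs_le, testDeriv]
    constructor <;> nlinarith [pow_nonneg hr₀ 3]
  unfold testSlope
  split_ifs with h₀
  · exact key _ h₀ hr.2
  · rw [abs_neg]; exact key _ (by linarith) (by linarith)

lemma measurable_testSlope : Measurable (testSlope p) := by
  unfold testSlope testDeriv
  exact Measurable.ite (measurableSet_le measurable_const measurable_centeredRep)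
    (by fun_prop) (by fun_prop)

end TestFunction

section Expectations

variable {Ω : Type*} {mΩ : MeasurableSpace Ω} {P : Measure Ω}

lemma exists_bound_of_continuous_addCircle [Fact (0 < p)] {f : AddCircle p → ℝ}
    (hf : Continuous f) : ∃ C, ∀ y, |f y| ≤ C := by
  obtain ⟨C, hC⟩ := isCompact_univ.exists_bound_of_continuousOn hf.continuousOn
  exact ⟨C, fun y => hC y (mem_univ y)⟩

lemma integrable_comp_coe [Fact (0 < p)] [IsFiniteMeasure P] {f : AddCircle p → ℝ}
    (hf : Continuous f) {D : Ω → ℝ} (hD : AEMeasurable D P) :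
    Integrable (fun ω => f (D ω)) P := by
  obtain ⟨C, hC⟩ := exists_bound_of_continuous_addCircle hf
  exact .of_bound
    ((hf.comp (AddCircle.continuous_mk' p)).measurable.comp_aemeasurable hD).aestronglyMeasurable
    C (ae_of_all _ fun ω => hC _)

lemma continuous_integral_comp_coe [Fact (0 < p)] [IsFiniteMeasure P] {f : AddCircle p → ℝ}
    (hf : Continuous f) {D : ℝ → Ω → ℝ} (hD : ∀ t, AEMeasurable (D t) P)
    (hcont : ∀ᵐ ω ∂P, Continuous fun t => D t ω) :
    Continuous fun t => ∫ ω, f (D t ω) ∂P := by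
  obtain ⟨C, hC⟩ := exists_bound_of_continuous_addCircle hf
  refine continuous_of_dominated (fun t => (integrable_comp_coe hf (hD t)).aestronglyMeasurable)
    (fun t => ae_of_all _ fun ω => hC _) (integrable_const C) ?_
  filter_upwards [hcont] with ω hω
  exact hf.comp ((AddCircle.continuous_mk' p).comp hω)

variable [IsProbabilityMeasure P]

lemma integral_testFn_le_add (hp : 0 < p) {m : MeasurableSpace Ω} (hm : m ≤ mΩ)
    {D X₁ X₂ : Ω → ℝ} {δ : ℝ≥0} (hD : Measurable[m] D) (hX₁ : HasLaw X₁ (gaussianReal 0 δ) P)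
    (hX₂ : HasLaw X₂ (gaussianReal 0 δ) P)
    (hind₁ : Indep (MeasurableSpace.comap X₁ inferInstance) m P)
    (hind₂ : Indep (MeasurableSpace.comap X₂ inferInstance) m P) :
    ∫ ω, testFn p ‖(D ω : AddCircle p)‖ ∂P
      ≤ ∫ ω, testFn p ‖((D ω + X₁ ω - X₂ ω : ℝ) : AddCircle p)‖ ∂P
        + δ * ∫ ω, ‖(D ω : AddCircle p)‖ ^ 2 ∂P + 4 * p * gaussianAbsThirdMoment * δ * √δ := by
  have := Fact.mk hp
  have hQ : Measurable[m] fun ω => ‖(D ω : AddCircle p)‖ :=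
    (continuous_norm.comp (AddCircle.continuous_mk' p)).measurable.comp hD
  have hQB : ∀ ω, |‖(D ω : AddCircle p)‖ ^ 2 / 2| ≤ (p / 2) ^ 2 / 2 := fun ω => by
    rw [abs_of_nonneg (by positivity)]
    gcongr
    exact norm_coe_le_half_period hp _
  obtain ⟨hint₁, hterm₁⟩ := integral_gaussian_increment_term hm hX₁ hind₁
    (measurable_testSlope.comp hD) ((hQ.pow_const 2).div_const 2)
    (fun ω => abs_testSlope_le hp (D ω)) hQB (2 * p)
  obtain ⟨hint₂, hterm₂⟩ := integral_gaussian_increment_term hm hX₂ hind₂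
    (measurable_testSlope.comp hD).neg ((hQ.pow_const 2).div_const 2)
    (fun ω => (abs_neg (testSlope p (D ω))).trans_le (abs_testSlope_le hp (D ω))) hQB (2 * p)
  have hD' : AEMeasurable D P := (hD.mono hm le_rfl).aemeasurable
  have hint₀ := integrable_comp_coe (P := P)
    (by fun_prop : Continuous fun y : AddCircle p => testFn p ‖y‖) hD'
  have hmono := integral_mono ((hint₀.add hint₁).add hint₂)
    (integrable_comp_coe (by fun_prop : Continuous fun y : AddCircle p => testFn p ‖y‖)
      ((hD'.add hX₁.aemeasurable).sub hX₂.aemeasurable))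
    (fun ω => testFn_norm_coe_add_sub_ge hp (D ω) (X₁ ω) (X₂ ω))
  rw [integral_add' (hint₀.add hint₁) hint₂, integral_add' hint₀ hint₁, hterm₁, hterm₂,
    integral_div] at hmono
  simp only [Pi.sub_apply, Pi.add_apply] at hmono
  have : √(δ : ℝ) ^ 3 = δ * √δ := by rw [pow_succ, Real.sq_sqrt δ.coe_nonneg]
  rw [this] at hmono
  linarith

lemma integral_testFn_le_of_integral_sq_le (hp : 0 < p) {D : Ω → ℝ} (hD : AEMeasurable D P)
    {c : ℝ} (hc : 0 < c) (h : ∫ ω, ‖(D ω : AddCircle p)‖ ^ 2 ∂P ≤ c ^ 2) :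
    ∫ ω, testFn p ‖(D ω : AddCircle p)‖ ∂P ≤ (p / 2) ^ 3 / 6 * c := by
  have := Fact.mk hp
  set A := (p / 2) ^ 3 / 6
  -- AM-GM: `r ≤ r² / (2c) + c / 2`
  have hpt : ∀ r : ℝ, 0 ≤ r → testFn p r ≤ A / (2 * c) * r ^ 2 + A * c / 2 := fun r hr => by
    have : r ≤ r ^ 2 / (2 * c) + c / 2 := by
      rw [div_add_div _ _ (by positivity) two_ne_zero, le_div_iff₀ (by positivity)]
      nlinarith [sq_nonneg (r - c)]
    calc testFn p r ≤ A * r := testFn_le p hr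
      _ ≤ A * (r ^ 2 / (2 * c) + c / 2) := by gcongr
      _ = _ := by ring
  have hsq := integrable_comp_coe (P := P)
    (by fun_prop : Continuous fun y : AddCircle p => ‖y‖ ^ 2) hD
  have hmono := integral_mono
    (integrable_comp_coe (by fun_prop : Continuous fun y : AddCircle p => testFn p ‖y‖) hD)
    ((hsq.const_mul (A / (2 * c))).add (integrable_const (A * c / 2)))
    (fun ω => hpt _ (norm_nonneg _))
  rw [integral_add' (hsq.const_mul _) (integrable_const _), integral_const_mul, integral_const,
    probReal_univ, one_smul] at hmono
  calc _ ≤ _ := hmono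
    _ ≤ A / (2 * c) * c ^ 2 + A * c / 2 := by gcongr
    _ = A * c := by field_simp; ring

end Expectations

/-- `Φ + ∫ ψ` has nonnegative lower right Dini derivatives, hence is nondecreasing. -/
lemma sub_le_integral_of_forall_le {Φ ψ : ℝ → ℝ} {a K : ℝ} (hΦ : Continuous Φ)
    (hψ : Continuous ψ)
    (hstep : ∀ s t, a ≤ s → s ≤ t → Φ s ≤ Φ t + (t - s) * ψ s + K * (t - s) * √(t - s))
    {b : ℝ} (hab : a ≤ b) : Φ a - Φ b ≤ ∫ x in a..b, ψ x := by
  have hderiv x := (hψ.integral_hasStrictDerivAt a x).hasDerivAt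
  refine image_le_of_liminf_slope_right_le_deriv_boundary (f := fun t => Φ a - Φ t)
    (by fun_prop) (by simp) (fun x _ => (hderiv x).continuousAt.continuousWithinAt)
    (fun x _ => (hderiv x).hasDerivWithinAt) ?_ ⟨hab, le_rfl⟩
  intro x hx r hr
  have hlim : Tendsto (fun z => ψ x + K * √(z - x)) (𝓝[>] x) (𝓝 (ψ x)) := by
    have : Continuous fun z => ψ x + K * √(z - x) := by fun_prop
    simpa using (this.tendsto x).mono_left nhdsWithin_le_nhds
  refine Eventually.frequently ?_
  filter_upwards [hlim.eventually (gt_mem_nhds hr), self_mem_nhdsWithin] with z hz hxz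
  have hxz' : 0 < z - x := sub_pos.mpr hxz
  rw [slope_def_field, div_lt_iff₀ hxz']
  have := hstep x z hx.1 hxz.le
  nlinarith

lemma exists_lt_of_integrableOn_Ici {f : ℝ → ℝ} {a ε : ℝ} (hf : IntegrableOn f (Ici a))
    (hε : 0 < ε) : ∃ t ≥ a, f t < ε := by
  by_contra! h
  have hlt := hf.measure_ge_lt_top hε
  rw [Measure.restrict_apply' measurableSet_Ici] at hlt
  have : Ici a ⊆ {t | ε ≤ f t} ∩ Ici a := fun t ht => ⟨h t ht, ht⟩
  exact hlt.ne (top_unique ((measure_mono this).trans' (by simp)))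

section BrownianCoupling

variable {Ω : Type} [MeasurableSpace Ω] {P : Measure Ω} [IsProbabilityMeasure P]
  {𝒢 : Filtration ℝ ‹MeasurableSpace Ω›} {W₁ W₂ : ℝ → Ω → ℝ}

lemma integral_testFn_le_of_isBrownianMotion (hp : 0 < p) (h₁ : IsBrownianMotion P 𝒢 W₁)
    (h₂ : IsBrownianMotion P 𝒢 W₂) {s t : ℝ} (hs : 0 ≤ s) (hst : s ≤ t) :
    ∫ ω, testFn p ‖((W₁ s ω - W₂ s ω : ℝ) : AddCircle p)‖ ∂P
      ≤ ∫ ω, testFn p ‖((W₁ t ω - W₂ t ω : ℝ) : AddCircle p)‖ ∂P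
        + (t - s) * ∫ ω, ‖((W₁ s ω - W₂ s ω : ℝ) : AddCircle p)‖ ^ 2 ∂P
        + 4 * p * gaussianAbsThirdMoment * (t - s) * √(t - s) := by
  obtain ⟨hmeas₁, -, hadapt₁, hinc₁⟩ := h₁
  obtain ⟨hmeas₂, -, hadapt₂, hinc₂⟩ := h₂
  obtain ⟨hlaw₁, hind₁⟩ := hinc₁ s t hs hst
  obtain ⟨hlaw₂, hind₂⟩ := hinc₂ s t hs hst
  have := integral_testFn_le_add hp (𝒢.le s) (D := fun ω => W₁ s ω - W₂ s ω)
    (X₁ := fun ω => W₁ t ω - W₁ s ω) (X₂ := fun ω => W₂ t ω - W₂ s ω)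
    ((hadapt₁ s).sub (hadapt₂ s))
    ⟨((hmeas₁ t).sub (hmeas₁ s)).aemeasurable, hlaw₁⟩
    ⟨((hmeas₂ t).sub (hmeas₂ s)).aemeasurable, hlaw₂⟩ hind₁ hind₂
  simpa only [sub_add_sub_cancel', sub_sub_sub_cancel_right,
    Real.coe_toNNReal _ (sub_nonneg.mpr hst)] using this

theorem integral_testFn_le_setIntegral (hp : 0 < p) (h₁ : IsBrownianMotion P 𝒢 W₁)
    (h₂ : IsBrownianMotion P 𝒢 W₂) {C : ℝ → ℝ} (hC : IntegrableOn C (Ici 0))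
    (hψC : ∀ t ≥ (0 : ℝ), ∫ ω, ‖((W₁ t ω - W₂ t ω : ℝ) : AddCircle p)‖ ^ 2 ∂P ≤ C t) :
    ∫ ω, testFn p ‖((W₁ 0 ω - W₂ 0 ω : ℝ) : AddCircle p)‖ ∂P ≤ ∫ t in Ici 0, C t := by
  have := Fact.mk hp
  set Φ := fun t => ∫ ω, testFn p ‖((W₁ t ω - W₂ t ω : ℝ) : AddCircle p)‖ ∂P
  set ψ := fun t => ∫ ω, ‖((W₁ t ω - W₂ t ω : ℝ) : AddCircle p)‖ ^ 2 ∂P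
  have hD t : AEMeasurable (fun ω => W₁ t ω - W₂ t ω) P :=
    (h₁.1 t).aemeasurable.sub (h₂.1 t).aemeasurable
  have hpaths : ∀ᵐ ω ∂P, Continuous fun t => W₁ t ω - W₂ t ω := by
    filter_upwards [h₁.2.1, h₂.2.1] with ω hω₁ hω₂ using hω₁.sub hω₂
  have hΦ : Continuous Φ := continuous_integral_comp_coe
    (by fun_prop : Continuous fun y : AddCircle p => testFn p ‖y‖) hD hpaths
  have hψ : Continuous ψ := continuous_integral_comp_coe
    (by fun_prop : Continuous fun y : AddCircle p => ‖y‖ ^ 2) hD hpaths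
  have hIoc (T : ℝ) : Ioc 0 T ⊆ Ici 0 := Ioc_subset_Ioi_self.trans Ioi_subset_Ici_self
  have hdecay : ∀ T ≥ (0 : ℝ), Φ 0 - Φ T ≤ ∫ t in Ici 0, C t := fun T hT =>
    calc Φ 0 - Φ T ≤ ∫ t in (0 : ℝ)..T, ψ t := sub_le_integral_of_forall_le hΦ hψ
          (fun s t hs hst => integral_testFn_le_of_isBrownianMotion hp h₁ h₂ hs hst) hT
      _ ≤ ∫ t in Ioc 0 T, C t := by
          rw [intervalIntegral.integral_of_le hT]
          exact setIntegral_mono_on hψ.integrableOn_Ioc (hC.mono_set (hIoc T))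
            measurableSet_Ioc fun t ht => hψC t ht.1.le
      _ ≤ ∫ t in Ici 0, C t := setIntegral_mono_set hC
          ((ae_restrict_mem measurableSet_Ici).mono fun t ht =>
            (integral_nonneg fun ω => by positivity).trans (hψC t ht))
          (hIoc T).eventuallyLE
  refine le_of_forall_pos_le_add fun ε hε => ?_
  set c := ε / ((p / 2) ^ 3 / 6)
  obtain ⟨T, hT, hCT⟩ := exists_lt_of_integrableOn_Ici hC (by positivity : 0 < c ^ 2)
  have hΦT := integral_testFn_le_of_integral_sq_le hp (hD T) (by positivity : 0 < c)
    ((hψC T hT).trans hCT.le)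
  rw [mul_div_cancel₀ _ (by positivity)] at hΦT
  linarith [hdecay T hT]

end BrownianCoupling

lemma sqrt_mul_rpow_neg_half_mul_sqrt_le {k z a I : ℝ} (hk : 0 ≤ k) (ha : 0 ≤ a)
    (hkz : 0 < k * z) (h : k * z ≤ a ^ 2 * I) : √k * I ^ (-(1 : ℝ) / 2) * √z ≤ a := by
  have hI : 0 < I := pos_of_mul_pos_right (hkz.trans_le h) (sq_nonneg a)
  rw [neg_div, Real.rpow_neg hI.le, ← Real.sqrt_eq_rpow, ← Real.sqrt_inv, mul_right_comm,
    ← Real.sqrt_mul hk, ← Real.sqrt_mul (by positivity), ← Real.sqrt_sq ha]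
  exact Real.sqrt_le_sqrt (by rwa [mul_inv_le_iff₀ hI])

end CoadaptedCoupling

open CoadaptedCoupling

theorem coadapted_coupling_sqrt_lower_bound_general
    (L : ℝ) (hL : 0 < L) (α β : ℝ → ℝ)
    (hα : ∀ z ∈ Set.Ioc 0 (π * L), 0 < α z)
    (hβint : IntegrableOn β (Set.Ici 0))
    (hcoupling : ∀ z ∈ Set.Ioc 0 (π * L),
      ∃ (Ω : Type) (m : MeasurableSpace Ω) (P : Measure Ω) (_ : IsProbabilityMeasure P)
        (𝒢 : Filtration ℝ m) (W₁ W₂ : ℝ → Ω → ℝ),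
        IsBrownianMotion P 𝒢 W₁ ∧ IsBrownianMotion P 𝒢 W₂ ∧
        (∀ ω, ‖((W₁ 0 ω - W₂ 0 ω : ℝ) : AddCircle (2 * π * L))‖ = z) ∧
        ∀ t ≥ (0:ℝ),
          ∫ ω, ‖((W₁ t ω - W₂ t ω : ℝ) : AddCircle (2 * π * L))‖ ^ 2 ∂P
            ≤ α z ^ 2 * β t) :
    ∃ c > (0:ℝ), ∀ z ∈ Set.Ioc 0 (π * L),
      α z ≥ c * (∫ t in Set.Ici (0:ℝ), β t) ^ (-(1:ℝ)/2) * sqrt z := by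
  refine ⟨√((π * L) ^ 3 / 8), by positivity, fun z hz => ?_⟩
  obtain ⟨Ω, m, P, hP, 𝒢, W₁, W₂, h₁, h₂, h₀, hbound⟩ := hcoupling z hz
  have hhalf : 2 * π * L / 2 = π * L := by ring
  have key : (π * L) ^ 3 / 8 * z ≤ α z ^ 2 * ∫ t in Ici 0, β t :=
    calc (π * L) ^ 3 / 8 * z ≤ testFn (2 * π * L) z := by
          simpa only [hhalf] using mul_le_testFn (p := 2 * π * L) hz.1.le (hhalf ▸ hz.2)
      _ = ∫ ω, testFn (2 * π * L) ‖((W₁ 0 ω - W₂ 0 ω : ℝ) : AddCircle (2 * π * L))‖ ∂P := by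
          simp only [h₀, integral_const, probReal_univ, one_smul]
      _ ≤ ∫ t in Ici 0, α z ^ 2 * β t :=
          integral_testFn_le_setIntegral (by positivity) h₁ h₂ (hβint.const_mul _) hbound
      _ = α z ^ 2 * ∫ t in Ici 0, β t := integral_const_mul _ _
  exact sqrt_mul_rpow_neg_half_mul_sqrt_le (by positivity) (hα z hz).le
    (by have := hz.1; positivity) key

/-- **Square-root lower bound on the initial-distance dependence of co-adapted
couplings.** Suppose `α : (0, πL] → ℝ⁺` and an integrable `β : [0,∞) → ℝ⁺` are such that
for every `z ∈ (0, πL]` there exist two standard Brownian motions `W¹, W²` on the torus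
`𝕋 = ℝ/(2πLℤ)` with a common filtration, with `|W¹_0 - W²_0|_𝕋 = z` and
`E[|W¹_t - W²_t|²_𝕋] ≤ α(z)² β(t)` for all `t ≥ 0`. Then there is `c > 0`, depending
only on `L`, with `α(z) ≥ c ‖β‖_{L¹}^{-1/2} √z` for all `z ∈ (0, πL]`. -/
theorem coadapted_coupling_sqrt_lower_bound
    (L : ℝ) (hL : 0 < L) (α β : ℝ → ℝ)
    (hα : ∀ z ∈ Set.Ioc 0 (π * L), 0 < α z)
    (hβpos : ∀ t ≥ (0:ℝ), 0 ≤ β t)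
    (hβint : IntegrableOn β (Set.Ici 0))
    (hcoupling : ∀ z ∈ Set.Ioc 0 (π * L),
      ∃ (Ω : Type) (m : MeasurableSpace Ω) (P : Measure Ω) (_ : IsProbabilityMeasure P)
        (𝒢 : Filtration ℝ m) (W₁ W₂ : ℝ → Ω → ℝ),
        IsBrownianMotion P 𝒢 W₁ ∧ IsBrownianMotion P 𝒢 W₂ ∧
        (∀ ω, ‖((W₁ 0 ω - W₂ 0 ω : ℝ) : AddCircle (2 * π * L))‖ = z) ∧
        ∀ t ≥ (0:ℝ),
          ∫ ω, ‖((W₁ t ω - W₂ t ω : ℝ) : AddCircle (2 * π * L))‖ ^ 2 ∂P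
            ≤ α z ^ 2 * β t) :
    ∃ c > (0:ℝ), ∀ z ∈ Set.Ioc 0 (π * L),
      α z ≥ c * (∫ t in Set.Ici (0:ℝ), β t) ^ (-(1:ℝ)/2) * sqrt z :=
  coadapted_coupling_sqrt_lower_bound_general L hL α β hα hβint hcoupling
end
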